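/- arXiv:1706.08611 — 3 statements merged into one kernel-verified Lean document; each statement's English description precedes it below -/
import Mathlib

section
/- Let O be the interleaved ordering β_1, β̄_1, β_2, β̄_2, ..., β_{N/2}, β̄_{N/2} of {0,1}^n (β_1,...,β_N lexicographic, N = 2^n, β̄ the bitwise complement). Then for every coordinate i ∈ [n] and every bit b ∈ {0,1}, exactly half of the strings α with α[i] = b occur among the first N/2 positions of O, and the other half occur among the last N/2 positions. -/
/-- The assignment encoding the number `m` in binary, most significant bit first. -/
def ofNat (n m : ℕ) : Fin n → Bool := fun i => m.testBit (n - 1 - (i : ℕ))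

/-- Bitwise complement of an assignment. -/
def compl' {n : ℕ} (α : Fin n → Bool) : Fin n → Bool := fun i => !(α i)

/-- The interleaved ordering `β₁, β̄₁, β₂, β̄₂, …, β_{N/2}, β̄_{N/2}` of `{0,1}^n`,
where `β₁, …, β_N` is the lexicographic enumeration and `β̄` is the bitwise complement. -/
def interleave (n : ℕ) : List (Fin n → Bool) :=
  (List.range (2 ^ (n - 1))).flatMap (fun k => [ofNat n k, compl' (ofNat n k)])

lemma flat_count {n : ℕ} (i : Fin n) (b : Bool) (l : List ℕ) :
    (l.flatMap (fun k => [ofNat n k, compl' (ofNat n k)])).countP (fun α => α i == b)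
      = l.length := by
  induction l with
  | nil => simp
  | cons k l ih =>
    have h1 : List.countP (fun α => α i == b) [ofNat n k, compl' (ofNat n k)] = 1 := by
      simp only [List.countP_cons, List.countP_nil, compl']
      obtain h | h := Bool.eq_false_or_eq_true (ofNat n k i) <;> cases b <;> simp [h]
    rw [List.flatMap_cons, List.countP_append, ih, h1, List.length_cons, Nat.add_comm]

lemma flat_len {n : ℕ} (l : List ℕ) :
    (l.flatMap (fun k => [ofNat n k, compl' (ofNat n k)])).length = 2 * l.length := by
  induction l with
  | nil => simp
  | cons k l ih => simp [ih]; ring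

/-- In the interleaved ordering, for every coordinate i and bit b, exactly half
(i.e. 2^(n-2)) of the 2^(n-1) strings with i-th bit b occur among the first N/2
positions, and the other half among the last N/2 positions. -/
theorem interleave_half_split {n : ℕ} (hn : 2 ≤ n) (i : Fin n) (b : Bool) :
    ((interleave n).take (2 ^ (n - 1))).countP (fun α => α i == b) = 2 ^ (n - 2) ∧
    ((interleave n).drop (2 ^ (n - 1))).countP (fun α => α i == b) = 2 ^ (n - 2) := by
  set f : ℕ → List (Fin n → Bool) := fun k => [ofNat n k, compl' (ofNat n k)] with hf
  have h1 : n - 1 = (n - 2) + 1 := by omega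
  have hsplit : List.range (2 ^ (n - 1))
      = List.range (2 ^ (n - 2)) ++ (List.range (2 ^ (n - 2))).map (2 ^ (n - 2) + ·) := by
    rw [h1, pow_succ, mul_two, List.range_add]
  have hA : interleave n
      = (List.range (2 ^ (n - 2))).flatMap f
        ++ ((List.range (2 ^ (n - 2))).map (2 ^ (n - 2) + ·)).flatMap f := by
    rw [interleave, hsplit, List.flatMap_append]
  have hlenA : ((List.range (2 ^ (n - 2))).flatMap f).length = 2 ^ (n - 1) := by
    rw [flat_len, List.length_range, h1, pow_succ]; ring
  constructor
  · rw [hA, List.take_append_of_le_length (le_of_eq hlenA.symm), List.take_of_length_le (le_of_eq hlenA)]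
    rw [flat_count, List.length_range]
  · rw [hA, List.drop_append_of_le_length (le_of_eq hlenA.symm),
      List.drop_eq_nil_of_le (le_of_eq hlenA)]
    simp only [List.nil_append]
    rw [flat_count]
    simp
end

section
/- For every n > 4 there exists an ordering O of {0,1}^n such that for every complete depth-n decision tree T on the n variables, the number of inversions d(O, O(T)) is at least 2^{n-2}, where d(O, O(T)) = |{α' ∈ {0,1}^n : ∃α ∈ {0,1}^n with α' <_O α and α <_{O(T)} α'}|. -/
/-- Complete decision trees on the variable set `s ⊆ Fin n`. -/
inductive DTree (n : ℕ) : Finset (Fin n) → Type where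
  | leaf : DTree n ∅
  | node (i : Fin n) (b : Bool) {s : Finset (Fin n)} (hi : i ∉ s)
      (left right : DTree n s) : DTree n (insert i s)

/-- The left-to-right list of leaf labels. -/
def DTree.leaves {n : ℕ} : {s : Finset (Fin n)} → DTree n s → (Fin n → Bool) → List (Fin n → Bool)
  | _, .leaf, f => [f]
  | _, .node i b _ l r, f =>
      l.leaves (Function.update f i b) ++ r.leaves (Function.update f i (!b))

/-- `d(O, O') = |{α' : ∃ α, α' <_O α ∧ α <_{O'} α'}|`, the number of elements
out of order in `O'` with respect to `O`, where orderings are enumerating lists. -/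
noncomputable def dOrd {S : Type*} [DecidableEq S] (O O' : List S) : ℕ :=
  Nat.card {a' : S // ∃ a : S, O.idxOf a' < O.idxOf a ∧ O'.idxOf a < O'.idxOf a'}

/-!
The root of a complete decision tree queries some variable `xᵢ`, and `O(T)` lists every string
with `xᵢ = b` before every string with `xᵢ = ¬b`. In the interleaved ordering each pair `β, β̄`
has exactly one member on each side, and the member on the `¬b` side of one pair precedes the
member on the `b` side of the next pair. So all pairs but the last contribute an inversion,
giving `2^(n-1) - 1 ≥ 2^(n-2)` of them.
-/

namespace DTree

variable {n : ℕ}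

theorem mem_leaves_iff {s : Finset (Fin n)} (T : DTree n s) (f g : Fin n → Bool) :
    g ∈ T.leaves f ↔ ∀ j ∉ s, g j = f j := by
  induction T generalizing f with
  | leaf => simp [leaves, funext_iff]
  | node i b hi l r ihl ihr =>
    simp only [leaves, List.mem_append, ihl, ihr, Finset.mem_insert, not_or]
    constructor
    · rintro (h | h) j ⟨hji, hj⟩ <;> simpa [Function.update_of_ne hji] using h j hj
    · intro h
      refine (em (g i = b)).imp (fun hgi j hj => ?_) (fun hgi j hj => ?_) <;>
        rcases eq_or_ne j i with rfl | hji <;>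
        simp_all [Function.update_of_ne, Bool.eq_not]

theorem mem_leaves_univ (T : DTree n Finset.univ) (f g : Fin n → Bool) : g ∈ T.leaves f :=
  (T.mem_leaves_iff f g).2 fun j hj => absurd (Finset.mem_univ j) hj

theorem exists_idxOf_lt_idxOf {s : Finset (Fin n)} (T : DTree n s) (hs : s.Nonempty)
    (f : Fin n → Bool) : ∃ (i : Fin n) (b : Bool), ∀ α α' : Fin n → Bool, α ∈ T.leaves f →
      α i = b → α' i ≠ b → (T.leaves f).idxOf α < (T.leaves f).idxOf α' := by
  cases T with
  | leaf => exact absurd hs Finset.not_nonempty_empty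
  | node i b hi l r =>
    refine ⟨i, b, fun α α' hα hαi hα'i => ?_⟩
    have hαl : α ∈ l.leaves (Function.update f i b) := by
      rcases List.mem_append.1 hα with h | h
      · exact h
      · simpa [hαi] using (r.mem_leaves_iff _ _).1 h i hi
    have hα'l : α' ∉ l.leaves (Function.update f i b) := fun h =>
      hα'i (by simpa using (l.mem_leaves_iff _ _).1 h i hi)
    rw [leaves, List.idxOf_append_of_mem hαl, List.idxOf_append_of_notMem hα'l]
    exact Nat.lt_add_right _ (List.idxOf_lt_length_iff.2 hαl)

end DTree

section Inversions

variable {S : Type*} [DecidableEq S] [Finite S] {O L : List S}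

theorem le_dOrd_of_injective {k : ℕ} (g : Fin k → S) (hg : Function.Injective g)
    (hinv : ∀ j, ∃ a, O.idxOf (g j) < O.idxOf a ∧ L.idxOf a < L.idxOf (g j)) :
    k ≤ dOrd O L := by
  simpa [dOrd] using Nat.card_le_card_of_injective
    (fun j => ⟨g j, hinv j⟩ : Fin k → {a' // ∃ a, O.idxOf a' < O.idxOf a ∧ L.idxOf a < L.idxOf a'})
    fun j j' h => hg (congrArg Subtype.val h)

theorem le_dOrd_of_interleaved {N : ℕ} (β : ℕ → S) (c : S → S)
    (hβ : ∀ j < N, O.idxOf (β j) = 2 * j) (hc : ∀ j < N, O.idxOf (c (β j)) = 2 * j + 1)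
    (p : S → Prop) (hp : ∀ x, p (c x) ↔ ¬ p x)
    (hL : ∀ α α', p α → ¬ p α' → L.idxOf α < L.idxOf α') :
    N - 1 ≤ dOrd O L := by
  classical
  let onP j := if p (β j) then β j else c (β j)
  let offP j := if p (β j) then c (β j) else β j
  have onP_spec : ∀ j, p (onP j) := fun j => by
    by_cases h : p (β j) <;> simp [onP, h, hp]
  have offP_spec : ∀ j, ¬ p (offP j) := fun j => by
    by_cases h : p (β j) <;> simp [offP, h, hp]
  have idxOf_onP : ∀ j < N, 2 * j ≤ O.idxOf (onP j) := fun j hj => by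
    by_cases h : p (β j) <;> simp [onP, h, hβ j hj, hc j hj]
  have idxOf_offP : ∀ j < N, O.idxOf (offP j) / 2 = j := fun j hj => by
    by_cases h : p (β j) <;> simp [offP, h, hβ j hj, hc j hj]; omega
  refine le_dOrd_of_injective (fun j : Fin (N - 1) => offP j) (fun j j' h => ?_)
    fun j => ⟨onP (j + 1), ?_, hL _ _ (onP_spec _) (offP_spec _)⟩
  · have := congrArg (fun x => O.idxOf x / 2) h
    simp only [idxOf_offP _ (by omega : j.val < N), idxOf_offP _ (by omega : j'.val < N)] at this
    exact Fin.ext this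
  · have := idxOf_offP j (by omega)
    have := idxOf_onP (j + 1) (by omega)
    omega

end Inversions

def binaryVec (n j : ℕ) : Fin n → Bool := fun k => j.testBit k

theorem binaryVec_inj {n j j' : ℕ} (hj : j < 2 ^ n) (hj' : j' < 2 ^ n)
    (h : binaryVec n j = binaryVec n j') : j = j' := by
  refine Nat.eq_of_testBit_eq fun k => ?_
  by_cases hk : k < n
  · exact congrFun h ⟨k, hk⟩
  · have hpow : 2 ^ n ≤ 2 ^ k := Nat.pow_le_pow_right two_pos (by omega)
    rw [Nat.testBit_eq_false_of_lt (by omega), Nat.testBit_eq_false_of_lt (by omega)]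

/-- The `m`-th string of the paper's witnessing ordering `β₁, β̄₁, β₂, β̄₂, …`, where `β` is
read in binary with coordinate `n - 1` as the most significant bit, so that `β₁, …, β_{N/2}` are
the strings whose last coordinate is `false`. -/
def interleaved (n m : ℕ) : Fin n → Bool :=
  if m % 2 = 0 then binaryVec n (m / 2) else (binaryVec n (m / 2))ᶜ

def interleavedOrder (n : ℕ) : List (Fin n → Bool) :=
  (List.range (2 ^ n)).map (interleaved n)

section interleavedOrder

variable {n : ℕ}

theorem interleaved_apply_last (hn : n ≠ 0) {m : ℕ} (hm : m < 2 ^ n) :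
    interleaved n m ⟨n - 1, by omega⟩ = decide (m % 2 = 1) := by
  have hpow := Nat.two_pow_pred_add_two_pow_pred (Nat.pos_of_ne_zero hn)
  have htop : (m / 2).testBit (n - 1) = false := Nat.testBit_eq_false_of_lt (by omega)
  unfold interleaved
  split_ifs with h <;> simp [binaryVec, htop, h, Nat.mod_two_ne_zero.1]

theorem interleaved_inj (hn : n ≠ 0) {m m' : ℕ} (hm : m < 2 ^ n) (hm' : m' < 2 ^ n)
    (h : interleaved n m = interleaved n m') : m = m' := by
  have hparity : m % 2 = m' % 2 := by
    have := congrFun h ⟨n - 1, by omega⟩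
    rw [interleaved_apply_last hn hm, interleaved_apply_last hn hm'] at this
    simp only [decide_eq_decide] at this
    omega
  have hhalf : binaryVec n (m / 2) = binaryVec n (m' / 2) := by
    unfold interleaved at h
    split_ifs at h <;> first | exact h | exact compl_injective h | omega
  have := binaryVec_inj (by omega) (by omega) hhalf
  omega

theorem nodup_interleavedOrder (hn : n ≠ 0) : (interleavedOrder n).Nodup :=
  List.nodup_range.map_on fun _ hm _ hm' =>
    interleaved_inj hn (List.mem_range.1 hm) (List.mem_range.1 hm')

theorem mem_interleavedOrder (hn : n ≠ 0) (α : Fin n → Bool) : α ∈ interleavedOrder n := by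
  have : (interleavedOrder n).toFinset = Finset.univ :=
    Finset.eq_univ_of_card _ <| by
      rw [List.toFinset_card_of_nodup (nodup_interleavedOrder hn)]
      simp [interleavedOrder]
  simp [← List.mem_toFinset, this]

theorem idxOf_interleaved (hn : n ≠ 0) {m : ℕ} (hm : m < 2 ^ n) :
    (interleavedOrder n).idxOf (interleaved n m) = m := by
  simpa [interleavedOrder] using
    (nodup_interleavedOrder hn).idxOf_getElem m (by simpa [interleavedOrder] using hm)

theorem idxOf_binaryVec (hn : n ≠ 0) {j : ℕ} (hj : j < 2 ^ (n - 1)) :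
    (interleavedOrder n).idxOf (binaryVec n j) = 2 * j := by
  have hpow := Nat.two_pow_pred_add_two_pow_pred (Nat.pos_of_ne_zero hn)
  simpa [interleaved] using idxOf_interleaved hn (m := 2 * j) (by omega)

theorem idxOf_compl_binaryVec (hn : n ≠ 0) {j : ℕ} (hj : j < 2 ^ (n - 1)) :
    (interleavedOrder n).idxOf (binaryVec n j)ᶜ = 2 * j + 1 := by
  have hpow := Nat.two_pow_pred_add_two_pow_pred (Nat.pos_of_ne_zero hn)
  simpa [interleaved, Nat.add_mod, Nat.add_div] using idxOf_interleaved hn (m := 2 * j + 1) (by omega)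

end interleavedOrder

/-- For every n > 4 there is an ordering O of {0,1}^n such that for every complete
depth-n decision tree T, the number of inversions d(O, O(T)) is at least 2^(n-2). -/
theorem exists_hard_ordering {n : ℕ} (hn : 4 < n) :
    ∃ O : List (Fin n → Bool), O.Nodup ∧ (∀ α : Fin n → Bool, α ∈ O) ∧
      ∀ T : DTree n Finset.univ, 2 ^ (n - 2) ≤ dOrd O (T.leaves (fun _ => false)) := by
  have hn0 : n ≠ 0 := by omega
  refine ⟨interleavedOrder n, nodup_interleavedOrder hn0, mem_interleavedOrder hn0, fun T => ?_⟩
  obtain ⟨i, b, hroot⟩ :=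
    T.exists_idxOf_lt_idxOf ⟨⟨0, by omega⟩, Finset.mem_univ _⟩ (fun _ => false)
  have hpow : 2 ^ (n - 1) = 2 ^ (n - 2) * 2 := by rw [← pow_succ]; congr 1; omega
  calc 2 ^ (n - 2) ≤ 2 ^ (n - 1) - 1 := by have := Nat.one_le_two_pow (n := n - 2); omega
    _ ≤ _ := le_dOrd_of_interleaved (binaryVec n) compl
      (fun _ => idxOf_binaryVec hn0) (fun _ => idxOf_compl_binaryVec hn0) (fun α => α i = b)
      (fun α => by simp [Bool.eq_not])
      (fun α α' hα hα' => hroot α α' (T.mem_leaves_univ _ α) hα hα')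
end

section
/- Fix n ≥ 2 and let O be the interleaved ordering of {0,1}^n. For any i ∈ [n] and b ∈ {0,1}, let A = {α : α_i = b}. Then the O-greatest element of A lies among the last two positions of O; consequently, the number of elements of S∖A = {α : α_i = 1−b} that precede some element of A under O is at least 2^{n−1} − 1. -/
/-!
Positions `2k` and `2k + 1` of the interleaved order hold the pair `β_k, β̄_k`, and for
`k < 2^(n-1)` these pairs are disjoint, since `β_k` has leading bit `0` and `β̄_k` leading bit `1`.
Hence `idxOf x / 2` is the index of the pair containing `x`. The last pair has a member with
`i`-th bit `b`, at position `≥ 2^n - 2`; every earlier pair `k` has a member with `i`-th bit `!b`,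
which precedes it and, by its position, determines `k`.
-/

theorem List.idxOf_flatMap_range_pair_div_two {α : Type*} [DecidableEq α] {f g : ℕ → α}
    {m k : ℕ} {x : α} (hk : k < m) (hx : x ∈ [f k, g k])
    (hfresh : ∀ j < k, x ∉ [f j, g j]) :
    ((List.range m).flatMap fun j => [f j, g j]).idxOf x / 2 = k := by
  obtain ⟨r, rfl⟩ := Nat.exists_eq_add_of_lt hk
  have hprefix : x ∉ (List.range k).flatMap fun j => [f j, g j] := by
    simpa only [List.mem_flatMap, List.mem_range, not_exists, not_and] using hfresh
  have hlen : ((List.range k).flatMap fun j => [f j, g j]).length = 2 * k := by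
    simp [List.length_flatMap, mul_comm]
  have hpair (l : List α) : (f k :: g k :: l).idxOf x < 2 := by
    by_cases hf : f k = x
    · simp [hf]
    · have hg : g k = x := by simp_all [eq_comm]
      simp [hf, hg]
  rw [show k + r + 1 = k + (r + 1) by omega, List.range_add, List.flatMap_append,
    List.idxOf_append_of_notMem hprefix, hlen, List.range_succ_eq_map]
  simp only [List.map_cons, List.flatMap_cons, add_zero, List.cons_append, List.nil_append]
  rw [Nat.mul_add_div two_pos, Nat.div_eq_of_lt (hpair _), add_zero]

lemma ofNat_inj_of_lt {n k k' : ℕ} (hk : k < 2 ^ n) (hk' : k' < 2 ^ n)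
    (h : ofNat n k = ofNat n k') : k = k' := by
  refine Nat.eq_of_testBit_eq fun j => ?_
  rcases lt_or_ge j n with hj | hj
  · simpa [ofNat, Nat.sub_sub_self (by omega : j ≤ n - 1)] using congrFun h ⟨n - 1 - j, by omega⟩
  · have hpow := Nat.pow_le_pow_right two_pos hj
    rw [Nat.testBit_eq_false_of_lt (by omega), Nat.testBit_eq_false_of_lt (by omega)]

lemma ofNat_apply_zero {n k : ℕ} (hn : 0 < n) (hk : k < 2 ^ (n - 1)) :
    ofNat n k ⟨0, hn⟩ = false :=
  Nat.testBit_eq_false_of_lt (by simpa using hk)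

lemma eq_of_mem_pair_ofNat {n j k : ℕ} (hn : 0 < n) (hj : j < 2 ^ (n - 1)) (hk : k < 2 ^ (n - 1))
    {x : Fin n → Bool} (hxj : x ∈ [ofNat n j, compl' (ofNat n j)])
    (hxk : x ∈ [ofNat n k, compl' (ofNat n k)]) : j = k := by
  have hpow : 2 ^ (n - 1) ≤ 2 ^ n := Nat.pow_le_pow_right two_pos (Nat.sub_le n 1)
  simp only [List.mem_cons, List.not_mem_nil, or_false] at hxj hxk
  rcases hxj with rfl | rfl <;> rcases hxk with h | h
  · exact ofNat_inj_of_lt (by omega) (by omega) h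
  · simpa [compl', ofNat_apply_zero hn hj, ofNat_apply_zero hn hk] using congrFun h ⟨0, hn⟩
  · simpa [compl', ofNat_apply_zero hn hj, ofNat_apply_zero hn hk] using congrFun h ⟨0, hn⟩
  · exact ofNat_inj_of_lt (by omega) (by omega) (funext fun i => Bool.not_inj (congrFun h i))

lemma idxOf_interleave_div_two {n k : ℕ} (hn : 0 < n) (hk : k < 2 ^ (n - 1))
    {x : Fin n → Bool} (hx : x ∈ [ofNat n k, compl' (ofNat n k)]) :
    (interleave n).idxOf x / 2 = k :=
  List.idxOf_flatMap_range_pair_div_two hk hx fun _ hj hxj =>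
    hj.ne (eq_of_mem_pair_ofNat hn (hj.trans hk) hk hxj hx)

def pickBit {n : ℕ} (i : Fin n) (c : Bool) (α : Fin n → Bool) : Fin n → Bool :=
  if α i = c then α else compl' α

lemma pickBit_apply_self {n : ℕ} (i : Fin n) (c : Bool) (α : Fin n → Bool) :
    pickBit i c α i = c := by
  unfold pickBit compl'
  split_ifs with h
  · exact h
  · exact Bool.not_eq.mpr h

lemma pickBit_mem_pair {n : ℕ} (i : Fin n) (c : Bool) (α : Fin n → Bool) :
    pickBit i c α ∈ [α, compl' α] := by
  unfold pickBit
  split_ifs <;> simp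

theorem interleave_max_last_two_general {n : ℕ} (i : Fin n) (b : Bool) :
    (∀ mx : Fin n → Bool, mx i = b →
        (∀ α : Fin n → Bool, α i = b → (interleave n).idxOf α ≤ (interleave n).idxOf mx) →
        2 ^ n - 2 ≤ (interleave n).idxOf mx) ∧
    2 ^ (n - 1) - 1 ≤
      Nat.card {α' : Fin n → Bool // α' i = !b ∧
        ∃ α : Fin n → Bool, α i = b ∧ (interleave n).idxOf α' < (interleave n).idxOf α} := by
  have hn : 0 < n := i.pos
  set K := 2 ^ (n - 1) - 1
  have hK : K < 2 ^ (n - 1) := Nat.sub_lt Nat.one_le_two_pow one_pos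
  have h2K : 2 * K = 2 ^ n - 2 := by
    rw [Nat.mul_sub, ← pow_succ', Nat.sub_add_cancel hn]
  let top := pickBit i b (ofNat n K)
  have htop : 2 ^ n - 2 ≤ (interleave n).idxOf top := by
    have := idxOf_interleave_div_two (x := top) hn hK (pickBit_mem_pair i b _)
    omega
  let below (k : Fin K) : Fin n → Bool := pickBit i (!b) (ofNat n k)
  have hbelow (k : Fin K) : (interleave n).idxOf (below k) / 2 = k :=
    idxOf_interleave_div_two hn (k.2.trans hK) (pickBit_mem_pair i (!b) _)
  have hinj : Function.Injective below := fun k k' h =>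
    Fin.ext <| (hbelow k).symm.trans <| by rw [h, hbelow k']
  refine ⟨fun mx _ hmax => htop.trans (hmax top (pickBit_apply_self i b _)), ?_⟩
  calc 2 ^ (n - 1) - 1 = Nat.card (Fin K) := (Nat.card_fin K).symm
    _ ≤ _ := Nat.card_le_card_of_injective
      (fun k => ⟨below k, pickBit_apply_self i (!b) _, top, pickBit_apply_self i b _,
        by have := hbelow k; have := k.2; omega⟩)
      fun _ _ h => hinj (congrArg Subtype.val h)

/-- For the interleaved ordering O of {0,1}^n (n ≥ 2) and A = {α : α i = b}:
the O-greatest element of A lies among the last two positions of O, and at least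
2^(n-1) − 1 elements with i-th bit !b precede some element of A under O. -/
theorem interleave_max_last_two {n : ℕ} (hn : 2 ≤ n) (i : Fin n) (b : Bool) :
    (∀ mx : Fin n → Bool, mx i = b →
        (∀ α : Fin n → Bool, α i = b → (interleave n).idxOf α ≤ (interleave n).idxOf mx) →
        2 ^ n - 2 ≤ (interleave n).idxOf mx) ∧
    2 ^ (n - 1) - 1 ≤
      Nat.card {α' : Fin n → Bool // α' i = !b ∧
        ∃ α : Fin n → Bool, α i = b ∧ (interleave n).idxOf α' < (interleave n).idxOf α} :=
  interleave_max_last_two_general i b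
end
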